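/- arXiv:1310.6594 — 7 statements merged into one kernel-verified Lean document; each statement's English description precedes it below -/
import Mathlib

section
/- Let L be a complex finite-dimensional Leibniz algebra such that L/I ≅ sl2 ⊕ sl2 ⊕ … ⊕ sl2 (s copies) ⊕ R with R a solvable Lie ideal, and suppose the ideal I of squares is an irreducible right module over the first copy sl2^1. Then [I, sl2^j] = 0 for every j with 2 ≤ j ≤ s. -/
/-- Derived series (modulo nothing) of a subspace with respect to a bilinear bracket,
used to express solvability of the radical part. -/
def derSeries {L : Type*} [AddCommGroup L] [Module ℂ L]
    (B : L →ₗ[ℂ] L →ₗ[ℂ] L) (R₀ : Submodule ℂ L) : ℕ → Submodule ℂ L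
  | 0 => R₀
  | n + 1 => Submodule.span ℂ
      {z : L | ∃ a ∈ derSeries B R₀ n, ∃ b ∈ derSeries B R₀ n, z = B a b}

/-- Let `L` be a complex finite-dimensional Leibniz algebra with
`L/I ≅ sl₂¹ ⊕ ⋯ ⊕ sl₂ˢ ⊕ R` (`R` a solvable ideal), realized by a Levi family
`e j, f j, h j` of exact `sl₂`-triples with pairwise vanishing cross brackets, a
family `y` spanning the radical complement, spanning and independence mod `I`, and
suppose the ideal `I` of squares is an irreducible right `sl₂¹`-module.  Then
`[I, sl₂ʲ] = 0` for every copy `j ≠ 1`. -/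
theorem I_annihilated_by_other_copies
    (L : Type*) [AddCommGroup L] [Module ℂ L] [FiniteDimensional ℂ L]
    (B : L →ₗ[ℂ] L →ₗ[ℂ] L)
    (leib : ∀ x y z : L, B x (B y z) = B (B x y) z - B (B x z) y)
    (s : ℕ) (hs : 0 < s) (e f h : Fin s → L)
    (hsl2 : ∀ j, B (e j) (h j) = (2 : ℂ) • e j ∧ B (h j) (e j) = -((2 : ℂ) • e j) ∧
      B (h j) (f j) = (2 : ℂ) • f j ∧ B (f j) (h j) = -((2 : ℂ) • f j) ∧
      B (e j) (f j) = h j ∧ B (f j) (e j) = -(h j))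
    (hcross : ∀ j k, j ≠ k →
      ∀ u ∈ ({e j, f j, h j} : Set L), ∀ v ∈ ({e k, f k, h k} : Set L), B u v = 0)
    (n : ℕ) (y : Fin n → L) (R : Submodule ℂ L)
    (hR : R = Submodule.span ℂ (Set.range y))
    (I : Submodule ℂ L)
    (hI : I = Submodule.span ℂ {a : L | ∃ x : L, a = B x x})
    -- in the quotient `L/I`, the radical part commutes with the semisimple part,
    -- is a subalgebra, and is solvable
    (hRS : ∀ i j, ∀ u ∈ ({e j, f j, h j} : Set L), B (y i) u ∈ I ∧ B u (y i) ∈ I)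
    (hRR : ∀ i i', B (y i) (y i') ∈ R ⊔ I)
    (hsolv : ∃ k, derSeries B (R ⊔ I) k ≤ I)
    -- `L/I` is spanned by the images of the `e, f, h, y`, which are independent mod `I`
    (hspan : Submodule.span ℂ
        (Set.range e ∪ Set.range f ∪ Set.range h ∪ Set.range y) ⊔ I = ⊤)
    (hindep : LinearIndependent ℂ
      (fun v : (Fin s ⊕ Fin s ⊕ Fin s ⊕ Fin n) =>
        I.mkQ (Sum.elim e (Sum.elim f (Sum.elim h y)) v)))
    -- `I` is an irreducible right `sl₂¹`-module (copy of index `0`)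
    (hIne : I ≠ ⊥)
    (hirr : ∀ J : Submodule ℂ L, J ≤ I →
      (∀ a ∈ J, B a (e ⟨0, hs⟩) ∈ J ∧ B a (f ⟨0, hs⟩) ∈ J ∧ B a (h ⟨0, hs⟩) ∈ J) →
      J = ⊥ ∨ J = I) :
    ∀ a ∈ I, ∀ j : Fin s, j ≠ ⟨0, hs⟩ →
      B a (e j) = 0 ∧ B a (f j) = 0 ∧ B a (h j) = 0 := by

  classical
  -- squares lie in `I`
  have hsq : ∀ x : L, B x x ∈ I := by
    intro x; rw [hI]; exact Submodule.subset_span ⟨x, rfl⟩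
  -- `I` is a right ideal
  have hideal : ∀ z : L, ∀ a ∈ I, B a z ∈ I := by
    intro z a ha
    have hle : I ≤ Submodule.comap (B.flip z) I := by
      conv_lhs => rw [hI]
      apply Submodule.span_le.mpr
      rintro _ ⟨x, rfl⟩
      simp only [SetLike.mem_coe, Submodule.mem_comap, LinearMap.flip_apply]
      have key : B (B x x) z =
          B (x + B x z) (x + B x z) - B x x - B (B x z) (B x z) := by
        simp only [map_add, LinearMap.add_apply]
        rw [leib x x z]
        abel
      rw [key]
      exact sub_mem (sub_mem (hsq _) (hsq _)) (hsq _)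
    exact hle ha
  -- Schur's lemma: any operator `B · v` commuting with the sl2¹-action is scalar on I
  have schur : ∀ v : L,
      (∀ u ∈ ({e ⟨0, hs⟩, f ⟨0, hs⟩, h ⟨0, hs⟩} : Set L), B u v = 0) →
      ∃ c : ℂ, ∀ a ∈ I, B a v = c • a := by
    intro v hv
    haveI : Nontrivial I := Submodule.nontrivial_iff_ne_bot.mpr hIne
    let T : Module.End ℂ I := (B.flip v).restrict (fun a ha => hideal v a ha)
    obtain ⟨c, hc⟩ := Module.End.exists_eigenvalue T
    obtain ⟨w, hw⟩ := hc.exists_hasEigenvector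
    set J : Submodule ℂ L := I ⊓ LinearMap.ker (B.flip v - c • LinearMap.id) with hJdef
    have hmemJ : ∀ a : L, a ∈ J ↔ a ∈ I ∧ B a v = c • a := by
      intro a
      simp [hJdef, Submodule.mem_inf, LinearMap.mem_ker, LinearMap.sub_apply,
        LinearMap.flip_apply, LinearMap.smul_apply, sub_eq_zero]
    have hinvkey : ∀ u ∈ ({e ⟨0, hs⟩, f ⟨0, hs⟩, h ⟨0, hs⟩} : Set L),
        ∀ a ∈ J, B a u ∈ J := by
      intro u hu a ha
      rw [hmemJ] at ha ⊢
      obtain ⟨haI, hav⟩ := ha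
      refine ⟨hideal u a haI, ?_⟩
      have h0 : B u v = 0 := hv u hu
      have h1 := leib a u v
      rw [h0, map_zero] at h1
      have h2 : B (B a u) v = B (B a v) u := sub_eq_zero.mp h1.symm
      rw [h2, hav, map_smul, LinearMap.smul_apply]
    have hinv : ∀ a ∈ J, B a (e ⟨0, hs⟩) ∈ J ∧ B a (f ⟨0, hs⟩) ∈ J ∧
        B a (h ⟨0, hs⟩) ∈ J := by
      intro a ha
      exact ⟨hinvkey _ (by simp) a ha, hinvkey _ (by simp) a ha,
        hinvkey _ (by simp) a ha⟩
    rcases hirr J inf_le_left hinv with hbot | htop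
    · exfalso
      have hTw : ((T w : I) : L) = c • (w : L) := by
        rw [hw.apply_eq_smul]; rfl
      have hwJ : (w : L) ∈ J := by
        rw [hmemJ]
        refine ⟨w.2, ?_⟩
        have : ((T w : I) : L) = B (w : L) v := rfl
        rw [← this, hTw]
      rw [hbot, Submodule.mem_bot] at hwJ
      exact hw.2 (Subtype.coe_injective hwJ)
    · refine ⟨c, fun a ha => ?_⟩
      rw [← htop] at ha
      exact ((hmemJ a).mp ha).2
  intro a ha j hj
  have hne : (⟨0, hs⟩ : Fin s) ≠ j := fun h' => hj h'.symm
  have hcr := hcross ⟨0, hs⟩ j hne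
  obtain ⟨ce, hce⟩ := schur (e j) (fun u hu => hcr u hu (e j) (by simp))
  obtain ⟨cf, hcf⟩ := schur (f j) (fun u hu => hcr u hu (f j) (by simp))
  obtain ⟨ch, hch⟩ := schur (h j) (fun u hu => hcr u hu (h j) (by simp))
  obtain ⟨a0, ha0I, ha0⟩ := Submodule.exists_mem_ne_zero_of_ne_bot hIne
  obtain ⟨heh, hhe, hhf, hfh, hef, hfe⟩ := hsl2 j
  have hce0 : ce = 0 := by
    have h1 := leib a0 (h j) (e j)
    rw [hhe] at h1
    simp only [map_neg, map_smul, LinearMap.smul_apply, hce a0 ha0I,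
      hch a0 ha0I] at h1
    rw [smul_comm ch ce a0, sub_self] at h1
    have h2 : ce • a0 = 0 := by
      have h3 : ((2 : ℂ) • ce • a0) = 0 := neg_eq_zero.mp h1
      have h4 := smul_eq_zero.mp h3
      rcases h4 with h4 | h4
      · exact absurd h4 two_ne_zero
      · exact h4
    rcases smul_eq_zero.mp h2 with h4 | h4
    · exact h4
    · exact absurd h4 ha0
  have hcf0 : cf = 0 := by
    have h1 := leib a0 (h j) (f j)
    rw [hhf] at h1
    simp only [map_smul, LinearMap.smul_apply, hcf a0 ha0I, hch a0 ha0I] at h1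
    rw [smul_comm ch cf a0, sub_self] at h1
    rcases smul_eq_zero.mp h1 with h4 | h4
    · exact absurd h4 two_ne_zero
    · rcases smul_eq_zero.mp h4 with h5 | h5
      · exact h5
      · exact absurd h5 ha0
  have hae : B a (e j) = 0 := by rw [hce a ha, hce0, zero_smul]
  have haf : B a (f j) = 0 := by rw [hcf a ha, hcf0, zero_smul]
  refine ⟨hae, haf, ?_⟩
  have h1 := leib a (e j) (f j)
  rw [hef, hae, haf] at h1
  simpa using h1
end

section
/- Let L be a complex finite-dimensional Leibniz algebra with L/I ≅ sl2^1 ⊕ … ⊕ sl2^s ⊕ R (R solvable) and I an irreducible right sl2^1-module. Then for every i with 2 ≤ i ≤ s, the solvable part annihilates sl2^i on both sides: [R, sl2^i] = [sl2^i, R] = 0 (where R and sl2^i denote the corresponding Levi/radical subalgebras of L). -/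
theorem Submodule.exists_forall_apply_eq_smul_of_irreducible {K V : Type*} [Field K]
    [IsAlgClosed K] [AddCommGroup V] [Module K V] [FiniteDimensional K V]
    {S : Set (Module.End K V)} {I : Submodule K V} (hI : I ≠ ⊥)
    (hSI : ∀ φ ∈ S, ∀ a ∈ I, φ a ∈ I)
    (hirr : ∀ J ≤ I, (∀ φ ∈ S, ∀ a ∈ J, φ a ∈ J) → J = ⊥ ∨ J = I)
    {T : Module.End K V} (hTI : ∀ a ∈ I, T a ∈ I) (hTS : ∀ φ ∈ S, Commute T φ) :
    ∃ μ : K, ∀ a ∈ I, T a = μ • a := by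
  have : Nontrivial I := Submodule.nontrivial_iff_ne_bot.mpr hI
  obtain ⟨μ, hμ⟩ := Module.End.exists_eigenvalue (T.restrict hTI)
  obtain ⟨v, hv⟩ := hμ.exists_hasEigenvector
  set J := I ⊓ LinearMap.ker (T - μ • 1)
  have hmemJ : ∀ a, a ∈ J ↔ a ∈ I ∧ T a = μ • a := by
    simp [J, sub_eq_zero]
  have hJ : J = I := by
    refine (hirr J inf_le_left fun φ hφ a ha => ?_).resolve_left ?_
    · rw [hmemJ] at ha ⊢
      refine ⟨hSI φ hφ a ha.1, ?_⟩
      rw [← Module.End.mul_apply, (hTS φ hφ).eq, Module.End.mul_apply, ha.2, map_smul]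
    · have hvJ : (v : V) ∈ J := (hmemJ v).2 ⟨v.2, congrArg Subtype.val hv.apply_eq_smul⟩
      exact (Submodule.ne_bot_iff J).2 ⟨v, hvJ, fun hv0 => hv.2 (Subtype.ext hv0)⟩
  exact ⟨μ, fun a ha => ((hmemJ a).1 (hJ ▸ ha)).2⟩

section Leibniz

variable {K L : Type*} [Field K] [AddCommGroup L] [Module K L] {B : L →ₗ[K] L →ₗ[K] L}

variable (B) in
def IsRightLeibniz : Prop := ∀ x y z : L, B x (B y z) = B (B x y) z - B (B x z) y

variable (B) in
def idealOfSquares : Submodule K L := Submodule.span K {a : L | ∃ x : L, a = B x x}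

theorem bracket_eq_zero_of_mem_idealOfSquares (leib : IsRightLeibniz B) (x : L) {a : L}
    (ha : a ∈ idealOfSquares B) : B x a = 0 := by
  have hle : idealOfSquares B ≤ LinearMap.ker (B x) := by
    refine Submodule.span_le.2 ?_
    rintro _ ⟨z, rfl⟩
    simpa using leib x z z
  exact hle ha

theorem bracket_add_bracket_swap_mem_idealOfSquares (w v : L) :
    B w v + B v w ∈ idealOfSquares B := by
  have hsq : ∀ x : L, B x x ∈ idealOfSquares B := fun x => Submodule.subset_span ⟨x, rfl⟩
  have key : B w v + B v w = B (w + v) (w + v) - B w w - B v v := by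
    simp only [map_add, LinearMap.add_apply]
    abel
  rw [key]
  exact sub_mem (sub_mem (hsq _) (hsq _)) (hsq _)

theorem bracket_mem_idealOfSquares (leib : IsRightLeibniz B) (u : L) {a : L}
    (ha : a ∈ idealOfSquares B) : B a u ∈ idealOfSquares B := by
  have hle : idealOfSquares B ≤ (idealOfSquares B).comap (B.flip u) := by
    refine Submodule.span_le.2 ?_
    rintro _ ⟨z, rfl⟩
    have key : B (B z z) u = B z (B z u) + B (B z u) z := by
      rw [leib z z u]
      abel
    simpa only [SetLike.mem_coe, Submodule.mem_comap, LinearMap.flip_apply, key] using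
      bracket_add_bracket_swap_mem_idealOfSquares z (B z u)
  exact hle ha

theorem exists_forall_bracket_eq_smul_of_irreducible [IsAlgClosed K] [FiniteDimensional K L]
    (leib : IsRightLeibniz B) {I : Submodule K L} (hI : I ≠ ⊥) {W : Set L}
    (hWI : ∀ w ∈ W, ∀ a ∈ I, B a w ∈ I)
    (hirr : ∀ J ≤ I, (∀ w ∈ W, ∀ a ∈ J, B a w ∈ J) → J = ⊥ ∨ J = I)
    {x : L} (hxI : ∀ a ∈ I, B a x ∈ I) (hWx : ∀ w ∈ W, B w x = 0) :
    ∃ μ : K, ∀ a ∈ I, B a x = μ • a := by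
  refine I.exists_forall_apply_eq_smul_of_irreducible (S := B.flip '' W) (T := B.flip x) hI
    (Set.forall_mem_image.2 hWI) (fun J hJ hinv => hirr J hJ (Set.forall_mem_image.1 hinv))
    hxI (Set.forall_mem_image.2 fun w hw => LinearMap.ext fun a => ?_)
  have hswap := leib a w x
  rw [hWx w hw, map_zero, eq_comm, sub_eq_zero] at hswap
  exact hswap

theorem bracket_bracket_eq_zero_of_forall_eq_smul (leib : IsRightLeibniz B) {I : Submodule K L}
    {x y : L} {μ ν : K} (hx : ∀ a ∈ I, B a x = μ • a) (hy : ∀ a ∈ I, B a y = ν • a)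
    {a : L} (ha : a ∈ I) : B a (B x y) = 0 := by
  rw [leib, hx a ha, hy a ha, map_smul, map_smul, LinearMap.smul_apply, LinearMap.smul_apply,
    hx a ha, hy a ha, smul_smul, smul_smul, mul_comm, sub_self]

theorem bracket_bracket_eq_zero_of_mem (leib : IsRightLeibniz B) {N : Submodule K L} {x y : L}
    (hNx : ∀ a ∈ N, B a x = 0) (hNy : ∀ a ∈ N, B a y = 0) {z : L}
    (hx : B z x ∈ N) (hy : B z y ∈ N) : B z (B x y) = 0 := by
  rw [leib, hNy _ hx, hNx _ hy, sub_zero]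

theorem bracket_bracket_left_eq_zero_of_mem (leib : IsRightLeibniz B) {x y : L}
    (hIy : ∀ a ∈ idealOfSquares B, B a y = 0) {z : L}
    (hx : B x z ∈ idealOfSquares B) (hy : B y z ∈ idealOfSquares B) : B (B x y) z = 0 := by
  have key := leib x y z
  rw [bracket_eq_zero_of_mem_idealOfSquares leib x hy, hIy _ hx, sub_zero] at key
  exact key.symm

theorem mem_of_forall_bracket_mem_of_sl2 [NeZero (2 : K)] {e f h : L}
    (heh : B e h = (2 : K) • e) (hfh : B f h = -((2 : K) • f)) (hef : B e f = h)
    (P : Submodule K L) (hP : ∀ x ∈ ({e, f, h} : Set L), ∀ y ∈ ({e, f, h} : Set L), B x y ∈ P) :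
    ∀ u ∈ ({e, f, h} : Set L), u ∈ P := by
  have h2 : (2 : K) ≠ 0 := two_ne_zero
  rintro u (rfl | rfl | rfl)
  · have he := P.smul_mem (2 : K)⁻¹ (hP u (by simp) h (by simp))
    rwa [heh, smul_smul, inv_mul_cancel₀ h2, one_smul] at he
  · have hf := P.smul_mem (-(2 : K)⁻¹) (hP u (by simp) h (by simp))
    rwa [hfh, smul_neg, smul_smul, neg_mul, inv_mul_cancel₀ h2, neg_smul, one_smul,
      neg_neg] at hf
  · exact hef ▸ hP e (by simp) f (by simp)

end Leibniz

theorem radical_annihilates_other_copies_general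
    (L : Type*) [AddCommGroup L] [Module ℂ L] [FiniteDimensional ℂ L]
    (B : L →ₗ[ℂ] L →ₗ[ℂ] L)
    (leib : ∀ x y z : L, B x (B y z) = B (B x y) z - B (B x z) y)
    (s : ℕ) (hs : 0 < s) (e f h : Fin s → L)
    (hsl2 : ∀ j, B (e j) (h j) = (2 : ℂ) • e j ∧ B (h j) (e j) = -((2 : ℂ) • e j) ∧
      B (h j) (f j) = (2 : ℂ) • f j ∧ B (f j) (h j) = -((2 : ℂ) • f j) ∧
      B (e j) (f j) = h j ∧ B (f j) (e j) = -(h j))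
    (hcross : ∀ j k, j ≠ k →
      ∀ u ∈ ({e j, f j, h j} : Set L), ∀ v ∈ ({e k, f k, h k} : Set L), B u v = 0)
    (n : ℕ) (y : Fin n → L) (R : Submodule ℂ L)
    (hR : R = Submodule.span ℂ (Set.range y))
    (I : Submodule ℂ L)
    (hI : I = Submodule.span ℂ {a : L | ∃ x : L, a = B x x})
    -- in the quotient `L/I`, the radical part commutes with the semisimple part,
    -- is a subalgebra, and is solvable
    (hRS : ∀ i j, ∀ u ∈ ({e j, f j, h j} : Set L), B (y i) u ∈ I ∧ B u (y i) ∈ I)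
    -- `I` is an irreducible right `sl₂¹`-module (copy of index `0`)
    (hIne : I ≠ ⊥)
    (hirr : ∀ J : Submodule ℂ L, J ≤ I →
      (∀ a ∈ J, B a (e ⟨0, hs⟩) ∈ J ∧ B a (f ⟨0, hs⟩) ∈ J ∧ B a (h ⟨0, hs⟩) ∈ J) →
      J = ⊥ ∨ J = I) :
    ∀ r ∈ R, ∀ j : Fin s, j ≠ ⟨0, hs⟩ →
      ∀ u ∈ ({e j, f j, h j} : Set L), B r u = 0 ∧ B u r = 0 := by
  obtain rfl : I = idealOfSquares B := hI
  subst hR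
  intro r hr j hj
  obtain ⟨heh, -, -, hfh, hef, -⟩ := hsl2 j
  have hscalar : ∀ x ∈ ({e j, f j, h j} : Set L), ∃ μ : ℂ, ∀ a ∈ idealOfSquares B, B a x = μ • a :=
    fun x hx => exists_forall_bracket_eq_smul_of_irreducible leib hIne
      (fun w _ _ => bracket_mem_idealOfSquares leib w)
      (fun J hJ hinv => hirr J hJ fun a ha =>
        ⟨hinv _ (by simp) a ha, hinv _ (by simp) a ha, hinv _ (by simp) a ha⟩)
      (fun _ => bracket_mem_idealOfSquares leib x)
      (fun w hw => hcross _ _ (Ne.symm hj) w hw x hx)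
  have hIkill : ∀ a ∈ idealOfSquares B, ∀ u ∈ ({e j, f j, h j} : Set L), B a u = 0 :=
    fun a ha => mem_of_forall_bracket_mem_of_sl2 heh hfh hef (LinearMap.ker (B a))
      fun x hx x' hx' => by
        obtain ⟨μ, hμ⟩ := hscalar x hx
        obtain ⟨ν, hν⟩ := hscalar x' hx'
        exact bracket_bracket_eq_zero_of_forall_eq_smul leib hμ hν ha
  have hradical : ∀ i, ∀ u ∈ ({e j, f j, h j} : Set L),
      u ∈ LinearMap.ker (B (y i)) ⊓ LinearMap.ker (B.flip (y i)) := fun i =>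
    mem_of_forall_bracket_mem_of_sl2 heh hfh hef _ fun x hx x' hx' => Submodule.mem_inf.2
      ⟨bracket_bracket_eq_zero_of_mem leib (hIkill · · x hx) (hIkill · · x' hx')
          (hRS i j x hx).1 (hRS i j x' hx').1,
        bracket_bracket_left_eq_zero_of_mem leib (hIkill · · x' hx')
          (hRS i j x hx).2 (hRS i j x' hx').2⟩
  intro u hu
  have hle : Submodule.span ℂ (Set.range y) ≤ LinearMap.ker (B.flip u) ⊓ LinearMap.ker (B u) :=
    Submodule.span_le.2 <| Set.range_subset_iff.2 fun i => by
      simpa using hradical i u hu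
  simpa using hle hr

/-- Let `L` be a complex finite-dimensional Leibniz algebra with
`L/I ≅ sl₂¹ ⊕ ⋯ ⊕ sl₂ˢ ⊕ R` (`R` a solvable ideal), realized by a Levi family
`e j, f j, h j` of exact `sl₂`-triples with pairwise vanishing cross brackets, a
family `y` spanning the radical complement, spanning and independence mod `I`, and
suppose the ideal `I` of squares is an irreducible right `sl₂¹`-module.  Then the
radical part annihilates the other copies on both sides:
`[R, sl₂ʲ] = [sl₂ʲ, R] = 0` for every copy `j ≠ 1`. -/
theorem radical_annihilates_other_copies
    (L : Type*) [AddCommGroup L] [Module ℂ L] [FiniteDimensional ℂ L]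
    (B : L →ₗ[ℂ] L →ₗ[ℂ] L)
    (leib : ∀ x y z : L, B x (B y z) = B (B x y) z - B (B x z) y)
    (s : ℕ) (hs : 0 < s) (e f h : Fin s → L)
    (hsl2 : ∀ j, B (e j) (h j) = (2 : ℂ) • e j ∧ B (h j) (e j) = -((2 : ℂ) • e j) ∧
      B (h j) (f j) = (2 : ℂ) • f j ∧ B (f j) (h j) = -((2 : ℂ) • f j) ∧
      B (e j) (f j) = h j ∧ B (f j) (e j) = -(h j))
    (hcross : ∀ j k, j ≠ k →
      ∀ u ∈ ({e j, f j, h j} : Set L), ∀ v ∈ ({e k, f k, h k} : Set L), B u v = 0)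
    (n : ℕ) (y : Fin n → L) (R : Submodule ℂ L)
    (hR : R = Submodule.span ℂ (Set.range y))
    (I : Submodule ℂ L)
    (hI : I = Submodule.span ℂ {a : L | ∃ x : L, a = B x x})
    -- in the quotient `L/I`, the radical part commutes with the semisimple part,
    -- is a subalgebra, and is solvable
    (hRS : ∀ i j, ∀ u ∈ ({e j, f j, h j} : Set L), B (y i) u ∈ I ∧ B u (y i) ∈ I)
    (hRR : ∀ i i', B (y i) (y i') ∈ R ⊔ I)
    (hsolv : ∃ k, derSeries B (R ⊔ I) k ≤ I)
    -- `L/I` is spanned by the images of the `e, f, h, y`, which are independent mod `I`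
    (hspan : Submodule.span ℂ
        (Set.range e ∪ Set.range f ∪ Set.range h ∪ Set.range y) ⊔ I = ⊤)
    (hindep : LinearIndependent ℂ
      (fun v : (Fin s ⊕ Fin s ⊕ Fin s ⊕ Fin n) =>
        I.mkQ (Sum.elim e (Sum.elim f (Sum.elim h y)) v)))
    -- `I` is an irreducible right `sl₂¹`-module (copy of index `0`)
    (hIne : I ≠ ⊥)
    (hirr : ∀ J : Submodule ℂ L, J ≤ I →
      (∀ a ∈ J, B a (e ⟨0, hs⟩) ∈ J ∧ B a (f ⟨0, hs⟩) ∈ J ∧ B a (h ⟨0, hs⟩) ∈ J) →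
      J = ⊥ ∨ J = I) :
    ∀ r ∈ R, ∀ j : Fin s, j ≠ ⟨0, hs⟩ →
      ∀ u ∈ ({e j, f j, h j} : Set L), B r u = 0 ∧ B u r = 0 :=
  radical_annihilates_other_copies_general L B leib s hs e f h hsl2 hcross n y R hR I hI hRS hIne
    hirr
end

section
/- Let L be a finite-dimensional complex Leibniz algebra such that (i) L/I ≅ sl2^1 ⊕ sl2^2 ⊕ … ⊕ sl2^s ⊕ R where R is an n-dimensional solvable Lie algebra, and (ii) the ideal I of squares is an irreducible right sl2^1-module. Then L ≅ ((sl2^1 ⊕ R) ∔ I) ⊕ sl2^2 ⊕ … ⊕ sl2^s, i.e. L is the direct sum (as Leibniz algebras) of the subalgebra generated by sl2^1, R and I with the remaining copies of sl2. -/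
/-- Let `L` be a complex finite-dimensional Leibniz algebra with
`L/I ≅ sl₂¹ ⊕ ⋯ ⊕ sl₂ˢ ⊕ R` (`R` a solvable ideal), realized by a Levi family
`e j, f j, h j` of exact `sl₂`-triples with pairwise vanishing cross brackets, a
family `y` spanning the radical complement, spanning and independence mod `I`, and
suppose the ideal `I` of squares is an irreducible right `sl₂¹`-module.  Then
`L ≅ ((sl₂¹ ⊕ R) ∔ I) ⊕ sl₂² ⊕ ⋯ ⊕ sl₂ˢ` as Leibniz algebras: `L` decomposes as an
internal direct sum of the subalgebra generated by `sl₂¹, R, I` and the remaining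
copies of `sl₂`, with all mixed products involving a copy `sl₂ʲ` (`j ≠ 1`) zero. -/
theorem structure_direct_sum_decomposition
    (L : Type*) [AddCommGroup L] [Module ℂ L] [FiniteDimensional ℂ L]
    (B : L →ₗ[ℂ] L →ₗ[ℂ] L)
    (leib : ∀ x y z : L, B x (B y z) = B (B x y) z - B (B x z) y)
    (s : ℕ) (hs : 0 < s) (e f h : Fin s → L)
    (hsl2 : ∀ j, B (e j) (h j) = (2 : ℂ) • e j ∧ B (h j) (e j) = -((2 : ℂ) • e j) ∧
      B (h j) (f j) = (2 : ℂ) • f j ∧ B (f j) (h j) = -((2 : ℂ) • f j) ∧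
      B (e j) (f j) = h j ∧ B (f j) (e j) = -(h j))
    (hcross : ∀ j k, j ≠ k →
      ∀ u ∈ ({e j, f j, h j} : Set L), ∀ v ∈ ({e k, f k, h k} : Set L), B u v = 0)
    (n : ℕ) (y : Fin n → L) (R : Submodule ℂ L)
    (hR : R = Submodule.span ℂ (Set.range y))
    (I : Submodule ℂ L)
    (hI : I = Submodule.span ℂ {a : L | ∃ x : L, a = B x x})
    -- in the quotient `L/I`, the radical part commutes with the semisimple part,
    -- is a subalgebra, and is solvable
    (hRS : ∀ i j, ∀ u ∈ ({e j, f j, h j} : Set L), B (y i) u ∈ I ∧ B u (y i) ∈ I)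
    (hRR : ∀ i i', B (y i) (y i') ∈ R ⊔ I)
    (hsolv : ∃ k, derSeries B (R ⊔ I) k ≤ I)
    -- `L/I` is spanned by the images of the `e, f, h, y`, which are independent mod `I`
    (hspan : Submodule.span ℂ
        (Set.range e ∪ Set.range f ∪ Set.range h ∪ Set.range y) ⊔ I = ⊤)
    (hindep : LinearIndependent ℂ
      (fun v : (Fin s ⊕ Fin s ⊕ Fin s ⊕ Fin n) =>
        I.mkQ (Sum.elim e (Sum.elim f (Sum.elim h y)) v)))
    -- `I` is an irreducible right `sl₂¹`-module (copy of index `0`)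
    (hIne : I ≠ ⊥)
    (hirr : ∀ J : Submodule ℂ L, J ≤ I →
      (∀ a ∈ J, B a (e ⟨0, hs⟩) ∈ J ∧ B a (f ⟨0, hs⟩) ∈ J ∧ B a (h ⟨0, hs⟩) ∈ J) →
      J = ⊥ ∨ J = I) :
    -- `L` is the direct sum of the subalgebra `K = (sl₂¹ ⊕ R) ∔ I` and the
    -- remaining copies `sl₂ʲ` (`j ≠ 1`): `L` is spanned by these pieces and all
    -- products between a copy `sl₂ʲ` (`j ≠ 1`) and the rest of the algebra vanish.
    (Submodule.span ℂ ({e ⟨0, hs⟩, f ⟨0, hs⟩, h ⟨0, hs⟩} : Set L) ⊔ R ⊔ I) ⊔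
      (⨆ j : Fin s, Submodule.span ℂ ({e j, f j, h j} : Set L)) = ⊤ ∧
    ∀ j : Fin s, j ≠ ⟨0, hs⟩ →
      ∀ g ∈ Submodule.span ℂ ({e j, f j, h j} : Set L),
        (∀ z ∈ Submodule.span ℂ ({e ⟨0, hs⟩, f ⟨0, hs⟩, h ⟨0, hs⟩} : Set L) ⊔ R ⊔ I,
          B g z = 0 ∧ B z g = 0) ∧
        (∀ k : Fin s, k ≠ j → k ≠ ⟨0, hs⟩ →
          ∀ g' ∈ Submodule.span ℂ ({e k, f k, h k} : Set L),
            B g g' = 0 ∧ B g' g = 0) := by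
  classical
  set i0 : Fin s := ⟨0, hs⟩ with hi0
  have scal : ∀ (c : ℂ) (x z : L), B (c • x) z = c • B x z := fun c x z => by
    rw [map_smul, LinearMap.smul_apply]
  have scar : ∀ (x : L) (c : ℂ) (z : L), B x (c • z) = c • B x z := fun x c z =>
    map_smul (B x) c z
  have hsq : ∀ x : L, B x x ∈ I := fun x => hI ▸ Submodule.subset_span ⟨x, rfl⟩
  -- L · I = 0
  have hLI : ∀ (x : L) {a : L}, a ∈ I → B x a = 0 := by
    intro x a ha
    have hle : I ≤ LinearMap.ker (B x) := by
      rw [hI, Submodule.span_le]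
      rintro _ ⟨x', rfl⟩
      simp only [SetLike.mem_coe, LinearMap.mem_ker]
      rw [leib x x' x', sub_self]
    simpa using hle ha
  -- symmetrized products lie in I
  have hIsq : ∀ x z : L, B x z + B z x ∈ I := by
    intro x z
    have h1 : B (x + z) (x + z) - B x x - B z z = B x z + B z x := by
      simp only [map_add, LinearMap.add_apply]; abel
    rw [← h1]
    exact Submodule.sub_mem _ (Submodule.sub_mem _ (hsq _) (hsq _)) (hsq _)
  -- I is a right ideal
  have hIdeal : ∀ {a : L}, a ∈ I → ∀ z : L, B a z ∈ I := by
    intro a ha z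
    have hle : I ≤ Submodule.comap (B.flip z) I := by
      rw [hI, Submodule.span_le]
      rintro _ ⟨x, rfl⟩
      simp only [SetLike.mem_coe, Submodule.mem_comap, LinearMap.flip_apply]
      have h1 : B (B x x) z = B x (B x z) + B (B x z) x := by
        rw [leib x x z]; abel
      rw [h1]
      have h2 := hIsq x (B x z)
      rwa [hI] at h2
    exact hle ha
  -- right multiplications by cross-commuting elements commute
  have hcomm : ∀ (a u g : L), B u g = 0 → B (B a u) g = B (B a g) u := by
    intro a u g h0
    have h1 := leib a u g
    rw [h0, map_zero] at h1
    exact sub_eq_zero.mp h1.symm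
  -- Schur: right multiplication by sl2^j (j ≠ 0) acts by a scalar on I
  have key : ∀ j : Fin s, j ≠ i0 → ∀ g ∈ ({e j, f j, h j} : Set L),
      ∃ c : ℂ, ∀ a ∈ I, B a g = c • a := by
    intro j hj g hg
    have hIinv : ∀ x ∈ I, B.flip g x ∈ I := fun x hx => hIdeal hx g
    haveI : Nontrivial I := Submodule.nontrivial_iff_ne_bot.mpr hIne
    obtain ⟨c, hc⟩ := Module.End.exists_eigenvalue ((B.flip g).restrict hIinv)
    obtain ⟨v, hv⟩ := hc.exists_hasEigenvector
    refine ⟨c, ?_⟩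
    set J : Submodule ℂ L := I ⊓ LinearMap.ker (B.flip g - c • LinearMap.id) with hJ
    have hmemJ : ∀ a : L, a ∈ J ↔ a ∈ I ∧ B a g = c • a := by
      intro a
      simp [hJ, Submodule.mem_inf, LinearMap.mem_ker, LinearMap.sub_apply,
        LinearMap.flip_apply, LinearMap.smul_apply, LinearMap.id_apply, sub_eq_zero]
    have hinv : ∀ a ∈ J, B a (e i0) ∈ J ∧ B a (f i0) ∈ J ∧ B a (h i0) ∈ J := by
      intro a ha
      obtain ⟨haI, hag⟩ := (hmemJ a).mp ha
      have gen : ∀ u ∈ ({e i0, f i0, h i0} : Set L), B a u ∈ J := by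
        intro u hu
        rw [hmemJ]
        refine ⟨hIdeal haI u, ?_⟩
        have h0 : B u g = 0 := hcross i0 j (Ne.symm hj) u hu g hg
        rw [hcomm a u g h0, hag, scal]
      exact ⟨gen _ (by simp), gen _ (by simp), gen _ (by simp)⟩
    rcases hirr J inf_le_left hinv with hbot | htop
    · exfalso
      have hvJ : (v : L) ∈ J := by
        rw [hmemJ]
        refine ⟨v.2, ?_⟩
        have h1 := congrArg (Subtype.val) hv.apply_eq_smul
        simpa [LinearMap.restrict_apply, LinearMap.flip_apply] using h1
      rw [hbot, Submodule.mem_bot] at hvJ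
      exact hv.2 (Submodule.coe_eq_zero.mp hvJ)
    · intro a haI
      have haJ : a ∈ J := by rw [htop]; exact haI
      exact ((hmemJ a).mp haJ).2
  -- the scalars vanish: I · sl2^j = 0 for j ≠ 0
  have hIg : ∀ j : Fin s, j ≠ i0 → ∀ g ∈ ({e j, f j, h j} : Set L), ∀ a ∈ I, B a g = 0 := by
    intro j hj
    obtain ⟨ce, hce⟩ := key j hj (e j) (by simp)
    obtain ⟨cf, hcf⟩ := key j hj (f j) (by simp)
    obtain ⟨ch, hch⟩ := key j hj (h j) (by simp)
    obtain ⟨a0, ha0I, ha0⟩ := (Submodule.ne_bot_iff I).mp hIne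
    obtain ⟨heh, hhe, hhf, hfh, hef, hfe⟩ := hsl2 j
    have smul_ne : ∀ c : ℂ, c • a0 = 0 → c = 0 := by
      intro c hc
      rcases smul_eq_zero.mp hc with h' | h'
      · exact h'
      · exact absurd h' ha0
    have hch0 : ch = 0 := by
      apply smul_ne
      have t := leib a0 (e j) (f j)
      rw [hef, hch a0 ha0I, hce a0 ha0I, hcf a0 ha0I, scal, scal, hcf a0 ha0I,
        hce a0 ha0I, smul_smul, smul_smul, mul_comm cf ce, sub_self] at t
      exact t
    have hce0 : ce = 0 := by
      have t := leib a0 (e j) (h j)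
      rw [heh, scar, hce a0 ha0I, hch a0 ha0I, scal, scal, hch a0 ha0I, hce a0 ha0I,
        smul_smul, smul_smul, smul_smul, mul_comm ch ce, sub_self] at t
      exact (mul_eq_zero.mp (smul_ne _ t)).resolve_left two_ne_zero
    have hcf0 : cf = 0 := by
      have t := leib a0 (h j) (f j)
      rw [hhf, scar, hcf a0 ha0I, hch a0 ha0I, scal, scal, hcf a0 ha0I, hch a0 ha0I,
        smul_smul, smul_smul, smul_smul, mul_comm cf ch, sub_self] at t
      exact (mul_eq_zero.mp (smul_ne _ t)).resolve_left two_ne_zero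
    intro g hg a haI
    rcases (show g = e j ∨ g = f j ∨ g = h j by simpa using hg) with rfl | rfl | rfl
    · rw [hce a haI, hce0, zero_smul]
    · rw [hcf a haI, hcf0, zero_smul]
    · rw [hch a haI, hch0, zero_smul]
  -- products between sl2^j (j ≠ 0) and the radical generators vanish
  have hsl2y : ∀ j : Fin s, j ≠ i0 → ∀ i : Fin n,
      B (e j) (y i) = 0 ∧ B (f j) (y i) = 0 ∧ B (h j) (y i) = 0 ∧
      B (y i) (e j) = 0 ∧ B (y i) (f j) = 0 ∧ B (y i) (h j) = 0 := by
    intro j hj i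
    obtain ⟨heh, hhe, hhf, hfh, hef, hfe⟩ := hsl2 j
    have me : e j ∈ ({e j, f j, h j} : Set L) := by simp
    have mf : f j ∈ ({e j, f j, h j} : Set L) := by simp
    have mh : h j ∈ ({e j, f j, h j} : Set L) := by simp
    have hye := (hRS i j (e j) me).1
    have hyf := (hRS i j (f j) mf).1
    have hyh := (hRS i j (h j) mh).1
    have hey := (hRS i j (e j) me).2
    have hfy := (hRS i j (f j) mf).2
    have hhy := (hRS i j (h j) mh).2
    have h1 : B (e j) (y i) = 0 := by
      have t := leib (e j) (h j) (y i)
      rw [hLI (e j) hhy, heh, hIg j hj (h j) mh _ hey, scal, sub_zero] at t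
      exact (smul_eq_zero.mp t.symm).resolve_left two_ne_zero
    have h2 : B (h j) (y i) = 0 := by
      have t := leib (e j) (f j) (y i)
      rw [hLI (e j) hfy, hef, hIg j hj (f j) mf _ hey, sub_zero] at t
      exact t.symm
    have h3 : B (f j) (y i) = 0 := by
      have t := leib (h j) (f j) (y i)
      rw [hLI (h j) hfy, hhf, hIg j hj (f j) mf _ hhy, scal, sub_zero] at t
      exact (smul_eq_zero.mp t.symm).resolve_left two_ne_zero
    have h4 : B (y i) (e j) = 0 := by
      have t := leib (y i) (h j) (e j)
      rw [hhe, map_neg, scar, hIg j hj (e j) me _ hyh, hIg j hj (h j) mh _ hye,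
        sub_zero] at t
      exact (smul_eq_zero.mp (neg_eq_zero.mp t)).resolve_left two_ne_zero
    have h5 : B (y i) (f j) = 0 := by
      have t := leib (y i) (f j) (h j)
      rw [hfh, map_neg, scar, hIg j hj (h j) mh _ hyf, hIg j hj (f j) mf _ hyh,
        sub_zero] at t
      exact (smul_eq_zero.mp (neg_eq_zero.mp t)).resolve_left two_ne_zero
    have h6 : B (y i) (h j) = 0 := by
      have t := leib (y i) (e j) (f j)
      rw [hef, hIg j hj (f j) mf _ hye, hIg j hj (e j) me _ hyf, sub_zero] at t
      exact t
    exact ⟨h1, h3, h2, h4, h5, h6⟩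
  constructor
  · rw [← top_le_iff, ← hspan]
    apply sup_le
    · rw [Submodule.span_le]
      intro v hv
      simp only [Set.mem_union, Set.mem_range] at hv
      have hsub : ∀ j : Fin s, ∀ u ∈ ({e j, f j, h j} : Set L),
          u ∈ (Submodule.span ℂ ({e i0, f i0, h i0} : Set L) ⊔ R ⊔ I) ⊔
            ⨆ j : Fin s, Submodule.span ℂ ({e j, f j, h j} : Set L) :=
        fun j u hu =>
          Submodule.mem_sup_right (Submodule.mem_iSup_of_mem j (Submodule.subset_span hu))
      rcases hv with ((⟨j, rfl⟩ | ⟨j, rfl⟩) | ⟨j, rfl⟩) | ⟨i, rfl⟩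
      · exact hsub j _ (by simp)
      · exact hsub j _ (by simp)
      · exact hsub j _ (by simp)
      · exact Submodule.mem_sup_left (Submodule.mem_sup_left
          (Submodule.mem_sup_right (hR ▸ Submodule.subset_span ⟨i, rfl⟩)))
    · exact le_trans le_sup_right le_sup_left
  · intro j hj
    have genK : ∀ u ∈ ({e j, f j, h j} : Set L),
        ∀ z ∈ Submodule.span ℂ ({e i0, f i0, h i0} : Set L) ⊔ R ⊔ I,
          B u z = 0 ∧ B z u = 0 := by
      intro u hu z hz
      have hle : Submodule.span ℂ ({e i0, f i0, h i0} : Set L) ⊔ R ⊔ I ≤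
          LinearMap.ker (B u) ⊓ LinearMap.ker (B.flip u) := by
        refine sup_le (sup_le ?_ ?_) ?_
        · rw [Submodule.span_le]
          intro v hv
          simp only [SetLike.mem_coe, Submodule.mem_inf, LinearMap.mem_ker,
            LinearMap.flip_apply]
          exact ⟨hcross j i0 hj u hu v hv, hcross i0 j (Ne.symm hj) v hv u hu⟩
        · rw [hR, Submodule.span_le]
          rintro _ ⟨i, rfl⟩
          simp only [SetLike.mem_coe, Submodule.mem_inf, LinearMap.mem_ker,
            LinearMap.flip_apply]
          obtain ⟨h1, h2, h3, h4, h5, h6⟩ := hsl2y j hj i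
          rcases (show u = e j ∨ u = f j ∨ u = h j by simpa using hu) with rfl | rfl | rfl
          · exact ⟨h1, h4⟩
          · exact ⟨h2, h5⟩
          · exact ⟨h3, h6⟩
        · intro a haI
          simp only [Submodule.mem_inf, LinearMap.mem_ker, LinearMap.flip_apply]
          exact ⟨hLI u haI, hIg j hj u hu a haI⟩
      have h1 := hle hz
      simpa only [Submodule.mem_inf, LinearMap.mem_ker, LinearMap.flip_apply] using h1
    have genC : ∀ u ∈ ({e j, f j, h j} : Set L), ∀ k : Fin s, k ≠ j →
        ∀ g' ∈ Submodule.span ℂ ({e k, f k, h k} : Set L), B u g' = 0 ∧ B g' u = 0 := by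
      intro u hu k hk g' hg'
      have hle : Submodule.span ℂ ({e k, f k, h k} : Set L) ≤
          LinearMap.ker (B u) ⊓ LinearMap.ker (B.flip u) := by
        rw [Submodule.span_le]
        intro v hv
        simp only [SetLike.mem_coe, Submodule.mem_inf, LinearMap.mem_ker,
          LinearMap.flip_apply]
        exact ⟨hcross j k (Ne.symm hk) u hu v hv, hcross k j hk v hv u hu⟩
      have h1 := hle hg'
      simpa only [Submodule.mem_inf, LinearMap.mem_ker, LinearMap.flip_apply] using h1
    intro g hg
    induction hg using Submodule.span_induction with
    | mem u hu =>
      exact ⟨fun z hz => genK u hu z hz,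
        fun k hk _ g' hg' => genC u hu k hk g' hg'⟩
    | zero =>
      exact ⟨fun z _ => by simp, fun k _ _ g' _ => by simp⟩
    | add x y' hx hy ihx ihy =>
      refine ⟨fun z hz => ?_, fun k hk hk0 g' hg' => ?_⟩
      · exact ⟨by rw [map_add, LinearMap.add_apply, (ihx.1 z hz).1, (ihy.1 z hz).1,
            add_zero],
          by rw [map_add, (ihx.1 z hz).2, (ihy.1 z hz).2, add_zero]⟩
      · exact ⟨by rw [map_add, LinearMap.add_apply, (ihx.2 k hk hk0 g' hg').1,
            (ihy.2 k hk hk0 g' hg').1, add_zero],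
          by rw [map_add, (ihx.2 k hk hk0 g' hg').2, (ihy.2 k hk hk0 g' hg').2, add_zero]⟩
    | smul c x hx ihx =>
      refine ⟨fun z hz => ?_, fun k hk hk0 g' hg' => ?_⟩
      · exact ⟨by rw [scal, (ihx.1 z hz).1, smul_zero],
          by rw [scar, (ihx.1 z hz).2, smul_zero]⟩
      · exact ⟨by rw [scal, (ihx.2 k hk hk0 g' hg').1, smul_zero],
          by rw [scar, (ihx.2 k hk hk0 g' hg').2, smul_zero]⟩
end

section
/- Let L be a complex Leibniz algebra with L/I ≅ sl2^1 ⊕ sl2^2, where I = I_{1,1} ⊕ … ⊕ I_{1,s+1} is a direct sum of irreducible right sl2^1-modules each of dimension m+1, with bases {x_0^j,…,x_m^j} on which sl2^1 acts by the standard highest-weight formulas. Then the right action of the canonical generators e_2, f_2, h_2 of sl2^2 on I is 'constant along weight spaces': there exist scalars a_j^k, b_j^k, c_j^k (independent of i) such that [x_i^j, e_2] = Σ_k a_j^k x_i^k, [x_i^j, f_2] = Σ_k b_j^k x_i^k, [x_i^j, h_2] = Σ_k c_j^k x_i^k for all 0 ≤ i ≤ m. -/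
/-- Proposition 4.1: Let `L` be a complex Leibniz algebra with `L/I ≅ sl₂¹ ⊕ sl₂²`,
where `I = I₁,₁ ⊕ ⋯ ⊕ I₁,ₛ₊₁` is a direct sum of irreducible right `sl₂¹`-modules of
dimension `m+1` with bases `x_0^j, …, x_m^j` on which `sl₂¹` acts by the standard
highest-weight formulas, and a priori the action of `e₂, f₂, h₂` preserves each
weight space: `[x_i^j, e₂] = Σ_k a_{i,j}^k x_i^k`, etc.  Then the coefficients do not
depend on `i`: there are scalars `a_j^k, b_j^k, c_j^k` with
`[x_i^j, e₂] = Σ_k a_j^k x_i^k`, `[x_i^j, f₂] = Σ_k b_j^k x_i^k`,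
`[x_i^j, h₂] = Σ_k c_j^k x_i^k` for all `i`. -/
theorem action_constant_along_weight_spaces
    (L : Type*) [AddCommGroup L] [Module ℂ L]
    (B : L →ₗ[ℂ] L →ₗ[ℂ] L)
    (leib : ∀ x y z : L, B x (B y z) = B (B x y) z - B (B x z) y)
    (e₁ f₁ h₁ e₂ f₂ h₂ : L)
    (hsl1 : B e₁ h₁ = (2 : ℂ) • e₁ ∧ B h₁ e₁ = -((2 : ℂ) • e₁) ∧
      B h₁ f₁ = (2 : ℂ) • f₁ ∧ B f₁ h₁ = -((2 : ℂ) • f₁) ∧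
      B e₁ f₁ = h₁ ∧ B f₁ e₁ = -h₁)
    (hsl2 : B e₂ h₂ = (2 : ℂ) • e₂ ∧ B h₂ e₂ = -((2 : ℂ) • e₂) ∧
      B h₂ f₂ = (2 : ℂ) • f₂ ∧ B f₂ h₂ = -((2 : ℂ) • f₂) ∧
      B e₂ f₂ = h₂ ∧ B f₂ e₂ = -h₂)
    (hcross : ∀ u ∈ ({e₁, f₁, h₁} : Set L), ∀ v ∈ ({e₂, f₂, h₂} : Set L),
      B u v = 0 ∧ B v u = 0)
    (s m : ℕ) (x : Fin (s + 1) → Fin (m + 1) → L)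
    (hindep : LinearIndependent ℂ
      (fun p : Fin (s + 1) × Fin (m + 1) => x p.1 p.2))
    -- the standard `sl₂¹`-action on each `I₁,ⱼ`
    (hh : ∀ j i, B (x j i) h₁ = ((m : ℂ) - 2 * ((i : Fin (m+1)) : ℕ)) • x j i)
    (hf : ∀ (j) (i : Fin m), B (x j i.castSucc) f₁ = x j i.succ)
    (hflast : ∀ j, B (x j (Fin.last m)) f₁ = 0)
    (he0 : ∀ j, B (x j 0) e₁ = 0)
    (he : ∀ (j) (i : Fin m),
      B (x j i.succ) e₁ = (-(((i : ℕ) : ℂ) + 1) * ((m : ℂ) - (i : ℕ))) • x j i.castSucc)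
    -- a priori form of the action of `sl₂²` (the coefficients may depend on `i`)
    (hae : ∀ j i, ∃ a : Fin (s + 1) → ℂ, B (x j i) e₂ = ∑ k, a k • x k i)
    (haf : ∀ j i, ∃ b : Fin (s + 1) → ℂ, B (x j i) f₂ = ∑ k, b k • x k i)
    (hah : ∀ j i, ∃ c : Fin (s + 1) → ℂ, B (x j i) h₂ = ∑ k, c k • x k i) :
    ∃ a b c : Fin (s + 1) → Fin (s + 1) → ℂ, ∀ j i,
      B (x j i) e₂ = ∑ k, a j k • x k i ∧
      B (x j i) f₂ = ∑ k, b j k • x k i ∧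
      B (x j i) h₂ = ∑ k, c j k • x k i := by
  have key : ∀ (v : L), B f₁ v = 0 → ∀ (j) (a : Fin (s + 1) → ℂ),
      B (x j 0) v = ∑ k, a k • x k 0 → ∀ i, B (x j i) v = ∑ k, a k • x k i := by
    intro v hv j a h0 i
    induction i using Fin.induction with
    | zero => exact h0
    | succ i ih =>
      have hl := leib (x j i.castSucc) f₁ v
      rw [hv, map_zero, hf j i] at hl
      have h2 : B (x j i.succ) v = B (B (x j i.castSucc) v) f₁ :=
        (sub_eq_zero.mp hl.symm)
      rw [h2, ih, map_sum, LinearMap.sum_apply]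
      refine Finset.sum_congr rfl fun k _ => ?_
      rw [map_smul, LinearMap.smul_apply, hf k i]
  have hfe : B f₁ e₂ = 0 := (hcross f₁ (by simp) e₂ (by simp)).1
  have hff : B f₁ f₂ = 0 := (hcross f₁ (by simp) f₂ (by simp)).1
  have hfh : B f₁ h₂ = 0 := (hcross f₁ (by simp) h₂ (by simp)).1
  refine ⟨fun j => (hae j 0).choose, fun j => (haf j 0).choose,
    fun j => (hah j 0).choose, fun j i =>
    ⟨key e₂ hfe j _ (hae j 0).choose_spec i,
     key f₂ hff j _ (haf j 0).choose_spec i,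
     key h₂ hfh j _ (hah j 0).choose_spec i⟩⟩
end

section
/- Define a bracket on the complex vector space L with basis {e_1,h_1,f_1, e_2,h_2,f_2, x_0^1,…,x_m^1, x_0^2,…,x_m^2} by: [e_i,h_i]=−[h_i,e_i]=2e_i, [h_i,f_i]=−[f_i,h_i]=2f_i, [e_i,f_i]=−[f_i,e_i]=h_i for i=1,2; [x_k^i,h_1]=(m−2k)x_k^i, [x_k^i,f_1]=x_{k+1}^i (k<m), [x_k^i,e_1]=−k(m+1−k)x_{k−1}^i for i=1,2; [x_j^1,e_2]=x_j^2, [x_j^2,h_2]=x_j^2, [x_j^1,h_2]=−x_j^1, [x_j^2,f_2]=−x_j^1, all other products zero. Then L is a right Leibniz algebra (the Leibniz identity [x,[y,z]]=[[x,y],z]−[[x,z],y] holds). -/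
/-!
The vectors `e i, h i, f i` span a copy `S` of `sl₂ ⊕ sl₂`, and the `x_k^i` span an ideal `N`
with `[L, N] = 0` on which `S` acts from the right as `V(m) ⊗ ℂ²`. The Leibniz identity is
trilinear, so it suffices to check it on triples of basis vectors. If `y` or `z` lies in `N`,
every term vanishes; for `x, y, z ∈ S` it is the Jacobi identity of `sl₂ ⊕ sl₂`; for `x ∈ N` and
`y, z ∈ S` it says that `N` is a right `S`-module.
-/

open Submodule

theorem leibniz_of_span_eq_top {R M ι : Type*} [CommRing R] [AddCommGroup M] [Module R M]
    {v : ι → M} (hv : span R (Set.range v) = ⊤) {B : M →ₗ[R] M →ₗ[R] M}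
    (hB : ∀ i j k, B (v i) (B (v j) (v k)) = B (B (v i) (v j)) (v k) - B (B (v i) (v k)) (v j))
    (x y z : M) : B x (B y z) = B (B x y) z - B (B x z) y := by
  have hz : ∀ i j z, B (v i) (B (v j) z) = B (B (v i) (v j)) z - B (B (v i) z) (v j) :=
    fun i j => LinearMap.congr_fun <| LinearMap.ext_on_range hv
      (f := B (v i) ∘ₗ B (v j)) (g := B (B (v i) (v j)) - B.flip (v j) ∘ₗ B (v i)) (hB i j)
  have hy : ∀ i y, B (v i) (B y z) = B (B (v i) y) z - B (B (v i) z) y :=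
    fun i => LinearMap.congr_fun <| LinearMap.ext_on_range hv
      (f := B (v i) ∘ₗ B.flip z) (g := B.flip z ∘ₗ B (v i) - B (B (v i) z)) (fun j => hz i j z)
  exact LinearMap.congr_fun (LinearMap.ext_on_range hv (f := B.flip (B y z))
    (g := B.flip z ∘ₗ B.flip y - B.flip y ∘ₗ B.flip z) (fun i => hy i y)) x

section ExtendByZero

variable {R M N : Type*} [Semiring R] [AddCommMonoid M] [Module R M] [AddCommMonoid N]
  [Module R N] {n : ℕ}

theorem Function.extend_val_of_lt (x : Fin n → M) {k : ℕ} (hk : k < n) :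
    Function.extend Fin.val x 0 k = x ⟨k, hk⟩ :=
  Fin.val_injective.extend_apply x 0 ⟨k, hk⟩

theorem Function.extend_val_of_le (x : Fin n → M) {k : ℕ} (hk : n ≤ k) :
    Function.extend Fin.val x 0 k = 0 :=
  Function.extend_apply' (f := Fin.val) x 0 k (by rintro ⟨a, rfl⟩; omega)

theorem LinearMap.map_extend_val_of_smul (T : M →ₗ[R] N) {x : Fin n → M} {y : Fin n → N}
    {c : ℕ → R} (hT : ∀ k : Fin n, T (x k) = c k • y k) (k : ℕ) :
    T (Function.extend Fin.val x 0 k) = c k • Function.extend Fin.val y 0 k := by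
  rcases lt_or_ge k n with hk | hk
  · rw [Function.extend_val_of_lt x hk, Function.extend_val_of_lt y hk, hT]
  · rw [Function.extend_val_of_le x hk, Function.extend_val_of_le y hk, map_zero, smul_zero]

theorem LinearMap.map_extend_val_succ (T : M →ₗ[R] N) {m : ℕ} {x : Fin (m + 1) → M}
    {y : Fin (m + 1) → N} (hT : ∀ k : Fin m, T (x k.castSucc) = y k.succ)
    (hlast : T (x (Fin.last m)) = 0) (k : ℕ) :
    T (Function.extend Fin.val x 0 k) = Function.extend Fin.val y 0 (k + 1) := by
  rcases lt_trichotomy k m with hk | rfl | hk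
  · rw [Function.extend_val_of_lt x (by omega), Function.extend_val_of_lt y (by omega)]
    exact hT ⟨k, hk⟩
  · rw [Function.extend_val_of_lt x (by omega), Function.extend_val_of_le y le_rfl]
    exact hlast
  · rw [Function.extend_val_of_le x hk, Function.extend_val_of_le y (by omega), map_zero]

theorem LinearMap.map_extend_val_pred (T : M →ₗ[R] N) {m : ℕ} {x : Fin (m + 1) → M}
    {y : Fin (m + 1) → N} {c : ℕ → R} (hc₀ : c 0 = 0) (hc : c (m + 1) = 0)
    (hT₀ : T (x 0) = 0) (hT : ∀ k : Fin m, T (x k.succ) = c (k + 1) • y k.castSucc) (k : ℕ) :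
    T (Function.extend Fin.val x 0 k) = c k • Function.extend Fin.val y 0 (k - 1) := by
  rcases k with _ | k
  · rw [hc₀, zero_smul, Function.extend_val_of_lt x m.succ_pos]
    exact hT₀
  rcases lt_trichotomy k m with hk | rfl | hk
  · rw [Function.extend_val_of_lt x (by omega), Function.extend_val_of_lt y (by omega)]
    exact hT ⟨k, hk⟩
  · rw [Function.extend_val_of_le x le_rfl, hc, map_zero, zero_smul]
  · rw [Function.extend_val_of_le x (by omega), Function.extend_val_of_le y (by omega),
      map_zero, smul_zero]

end ExtendByZero

section Table

variable {V : Type*} [AddCommGroup V] [Module ℂ V]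

def sl2SumBasis (e h f : Fin 2 → V) (p : Fin 2 × Fin 3) : V := ![e p.1, h p.1, f p.1] p.2

theorem sl2SumBasis_leibniz (B : V →ₗ[ℂ] V →ₗ[ℂ] V) (e h f : Fin 2 → V)
    (hsl : ∀ i, B (e i) (h i) = (2 : ℂ) • e i ∧ B (h i) (e i) = -((2 : ℂ) • e i) ∧
      B (h i) (f i) = (2 : ℂ) • f i ∧ B (f i) (h i) = -((2 : ℂ) • f i) ∧
      B (e i) (f i) = h i ∧ B (f i) (e i) = -(h i) ∧
      B (e i) (e i) = 0 ∧ B (f i) (f i) = 0 ∧ B (h i) (h i) = 0)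
    (hcross : ∀ i j, i ≠ j →
      ∀ u ∈ ({e i, f i, h i} : Set V), ∀ v ∈ ({e j, f j, h j} : Set V), B u v = 0)
    (p q r : Fin 2 × Fin 3) :
    B (sl2SumBasis e h f p) (B (sl2SumBasis e h f q) (sl2SumBasis e h f r)) =
      B (B (sl2SumBasis e h f p) (sl2SumBasis e h f q)) (sl2SumBasis e h f r) -
        B (B (sl2SumBasis e h f p) (sl2SumBasis e h f r)) (sl2SumBasis e h f q) := by
  have h01 := hcross 0 1 (by decide)
  have h10 := hcross 1 0 (by decide)
  simp only [Set.forall_mem_insert, Set.mem_singleton_iff, forall_eq] at h01 h10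
  obtain ⟨ip, jp⟩ := p
  obtain ⟨iq, jq⟩ := q
  obtain ⟨ir, jr⟩ := r
  fin_cases ip <;> fin_cases jp <;> fin_cases iq <;> fin_cases jq <;> fin_cases ir <;>
    fin_cases jr <;> simp [sl2SumBasis, hsl, h01, h10, smul_smul]

/-- `x i n` stands for `x_n^i` when `n ≤ m` and for `0` when `n > m`, so that the action of the
first `sl₂` is given by the same formula for every `n`. -/
structure IsModuleTable (m : ℕ) (B : V →ₗ[ℂ] V →ₗ[ℂ] V) (e h f : Fin 2 → V)
    (x : Fin 2 → ℕ → V) : Prop where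
  mul_x_eq_zero : ∀ w i n, B w (x i n) = 0
  x_mul_h₀ : ∀ i n, B (x i n) (h 0) = ((m : ℂ) - 2 * n) • x i n
  x_mul_f₀ : ∀ i n, B (x i n) (f 0) = x i (n + 1)
  x_mul_e₀ : ∀ i n, B (x i n) (e 0) = (-(n : ℂ) * (m + 1 - n)) • x i (n - 1)
  x₀_mul_e₁ : ∀ n, B (x 0 n) (e 1) = x 1 n
  x₁_mul_e₁ : ∀ n, B (x 1 n) (e 1) = 0
  x₀_mul_h₁ : ∀ n, B (x 0 n) (h 1) = -x 0 n
  x₁_mul_h₁ : ∀ n, B (x 1 n) (h 1) = x 1 n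
  x₀_mul_f₁ : ∀ n, B (x 0 n) (f 1) = 0
  x₁_mul_f₁ : ∀ n, B (x 1 n) (f 1) = -x 0 n

namespace IsModuleTable

variable {m : ℕ} {B : V →ₗ[ℂ] V →ₗ[ℂ] V} {e h f : Fin 2 → V}

theorem of_fin {X : Fin 2 → Fin (m + 1) → V} (hann : ∀ w i k, B w (X i k) = 0)
    (hXh1 : ∀ i k, B (X i k) (h 0) = ((m : ℂ) - 2 * ((k : Fin (m+1)) : ℕ)) • X i k)
    (hXf1 : ∀ (i) (k : Fin m), B (X i k.castSucc) (f 0) = X i k.succ)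
    (hXf1last : ∀ i, B (X i (Fin.last m)) (f 0) = 0)
    (hXe10 : ∀ i, B (X i 0) (e 0) = 0)
    (hXe1 : ∀ (i) (k : Fin m), B (X i k.succ) (e 0) =
      (-(((k : ℕ) : ℂ) + 1) * ((m : ℂ) - (k : ℕ))) • X i k.castSucc)
    (hXe2a : ∀ k, B (X 0 k) (e 1) = X 1 k)
    (hXe2b : ∀ k, B (X 1 k) (e 1) = 0)
    (hXh2a : ∀ k, B (X 0 k) (h 1) = -(X 0 k))
    (hXh2b : ∀ k, B (X 1 k) (h 1) = X 1 k)
    (hXf2a : ∀ k, B (X 0 k) (f 1) = 0)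
    (hXf2b : ∀ k, B (X 1 k) (f 1) = -(X 0 k)) :
    IsModuleTable m B e h f (fun i => Function.extend Fin.val (X i) 0) where
  mul_x_eq_zero w i n := by
    simpa using (B w).map_extend_val_of_smul (c := 0) (y := X i) (fun k => by simp [hann]) n
  x_mul_h₀ i := (B.flip (h 0)).map_extend_val_of_smul (hXh1 i)
  x_mul_f₀ i := (B.flip (f 0)).map_extend_val_succ (hXf1 i) (hXf1last i)
  x_mul_e₀ i := (B.flip (e 0)).map_extend_val_pred (by simp) (by simp) (hXe10 i) fun k => by
    rw [LinearMap.flip_apply, hXe1]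
    congr 1
    push_cast
    ring
  x₀_mul_e₁ n := by
    simpa using (B.flip (e 1)).map_extend_val_of_smul (c := 1) (fun k => by simp [hXe2a]) n
  x₁_mul_e₁ n := by
    simpa using (B.flip (e 1)).map_extend_val_of_smul (c := 0) (y := X 1)
      (fun k => by simp [hXe2b]) n
  x₀_mul_h₁ n := by
    simpa using (B.flip (h 1)).map_extend_val_of_smul (c := -1) (fun k => by simp [hXh2a]) n
  x₁_mul_h₁ n := by
    simpa using (B.flip (h 1)).map_extend_val_of_smul (c := 1) (fun k => by simp [hXh2b]) n
  x₀_mul_f₁ n := by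
    simpa using (B.flip (f 1)).map_extend_val_of_smul (c := 0) (y := X 0)
      (fun k => by simp [hXf2a]) n
  x₁_mul_f₁ n := by
    simpa using (B.flip (f 1)).map_extend_val_of_smul (c := -1) (fun k => by simp [hXf2b]) n

variable {x : Fin 2 → ℕ → V}

theorem mul_x_mul_eq_zero (hx : IsModuleTable m B e h f x) (w : V) (i : Fin 2) (n : ℕ)
    (r : Fin 2 × Fin 3) : B w (B (x i n) (sl2SumBasis e h f r)) = 0 := by
  obtain ⟨ir, jr⟩ := r
  fin_cases i <;> fin_cases ir <;> fin_cases jr <;>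
    simp [sl2SumBasis, hx.mul_x_eq_zero, hx.x_mul_h₀, hx.x_mul_f₀, hx.x_mul_e₀, hx.x₀_mul_e₁,
      hx.x₁_mul_e₁, hx.x₀_mul_h₁, hx.x₁_mul_h₁, hx.x₀_mul_f₁, hx.x₁_mul_f₁]

theorem leibniz (hx : IsModuleTable m B e h f x)
    (hsl : ∀ i, B (e i) (h i) = (2 : ℂ) • e i ∧ B (h i) (e i) = -((2 : ℂ) • e i) ∧
      B (h i) (f i) = (2 : ℂ) • f i ∧ B (f i) (h i) = -((2 : ℂ) • f i) ∧
      B (e i) (f i) = h i ∧ B (f i) (e i) = -(h i) ∧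
      B (e i) (e i) = 0 ∧ B (f i) (f i) = 0 ∧ B (h i) (h i) = 0)
    (hcross : ∀ i j, i ≠ j →
      ∀ u ∈ ({e i, f i, h i} : Set V), ∀ v ∈ ({e j, f j, h j} : Set V), B u v = 0)
    (i : Fin 2) (n : ℕ) (q r : Fin 2 × Fin 3) :
    B (x i n) (B (sl2SumBasis e h f q) (sl2SumBasis e h f r)) =
      B (B (x i n) (sl2SumBasis e h f q)) (sl2SumBasis e h f r) -
        B (B (x i n) (sl2SumBasis e h f r)) (sl2SumBasis e h f q) := by
  have h01 := hcross 0 1 (by decide)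
  have h10 := hcross 1 0 (by decide)
  simp only [Set.forall_mem_insert, Set.mem_singleton_iff, forall_eq] at h01 h10
  obtain ⟨iq, jq⟩ := q
  obtain ⟨ir, jr⟩ := r
  fin_cases i <;> fin_cases iq <;> fin_cases jq <;> fin_cases ir <;> fin_cases jr <;>
    rcases n with _ | n <;>
    simp [sl2SumBasis, hsl, h01, h10, hx.x_mul_h₀, hx.x_mul_f₀, hx.x_mul_e₀, hx.x₀_mul_e₁,
      hx.x₁_mul_e₁, hx.x₀_mul_h₁, hx.x₁_mul_h₁, hx.x₀_mul_f₁, hx.x₁_mul_f₁, smul_smul] <;>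
    module

end IsModuleTable

end Table

theorem table_of_thm42_is_Leibniz_general
    (m : ℕ) (V : Type*) [AddCommGroup V] [Module ℂ V]
    (B : V →ₗ[ℂ] V →ₗ[ℂ] V)
    (e h f : Fin 2 → V) (X : Fin 2 → Fin (m + 1) → V)
    (hspan : Submodule.span ℂ
      (Set.range (Sum.elim (fun p : Fin 2 × Fin 3 => ![e p.1, h p.1, f p.1] p.2)
        (fun p : Fin 2 × Fin (m + 1) => X p.1 p.2))) = ⊤)
    -- two commuting copies of sl₂
    (hsl : ∀ i, B (e i) (h i) = (2 : ℂ) • e i ∧ B (h i) (e i) = -((2 : ℂ) • e i) ∧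
      B (h i) (f i) = (2 : ℂ) • f i ∧ B (f i) (h i) = -((2 : ℂ) • f i) ∧
      B (e i) (f i) = h i ∧ B (f i) (e i) = -(h i) ∧
      B (e i) (e i) = 0 ∧ B (f i) (f i) = 0 ∧ B (h i) (h i) = 0)
    (hcross : ∀ i j, i ≠ j →
      ∀ u ∈ ({e i, f i, h i} : Set V), ∀ v ∈ ({e j, f j, h j} : Set V), B u v = 0)
    -- the action of the first copy of sl₂ on the modules
    (hXh1 : ∀ i k, B (X i k) (h 0) = ((m : ℂ) - 2 * ((k : Fin (m+1)) : ℕ)) • X i k)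
    (hXf1 : ∀ (i) (k : Fin m), B (X i k.castSucc) (f 0) = X i k.succ)
    (hXf1last : ∀ i, B (X i (Fin.last m)) (f 0) = 0)
    (hXe10 : ∀ i, B (X i 0) (e 0) = 0)
    (hXe1 : ∀ (i) (k : Fin m), B (X i k.succ) (e 0) =
      (-(((k : ℕ) : ℂ) + 1) * ((m : ℂ) - (k : ℕ))) • X i k.castSucc)
    -- the action of the second copy of sl₂
    (hXe2a : ∀ k, B (X 0 k) (e 1) = X 1 k)
    (hXe2b : ∀ k, B (X 1 k) (e 1) = 0)
    (hXh2a : ∀ k, B (X 0 k) (h 1) = -(X 0 k))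
    (hXh2b : ∀ k, B (X 1 k) (h 1) = X 1 k)
    (hXf2a : ∀ k, B (X 0 k) (f 1) = 0)
    (hXf2b : ∀ k, B (X 1 k) (f 1) = -(X 0 k))
    -- all remaining products are zero
    (hleft : ∀ u ∈ ({e 0, f 0, h 0, e 1, f 1, h 1} : Set V), ∀ i k, B u (X i k) = 0)
    (hXX : ∀ i k j l, B (X i k) (X j l) = 0) :
    ∀ x y z : V, B x (B y z) = B (B x y) z - B (B x z) y := by
  have hann : ∀ w i k, B w (X i k) = 0 := fun w i k => by
    refine LinearMap.congr_fun (LinearMap.ext_on_range hspan (f := B.flip (X i k)) (g := 0) ?_) w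
    rintro (⟨j, a⟩ | ⟨j, l⟩)
    · fin_cases j <;> fin_cases a <;> exact hleft _ (by simp) i k
    · exact hXX j l i k
  have hx := IsModuleTable.of_fin hann hXh1 hXf1 hXf1last hXe10 hXe1 hXe2a hXe2b hXh2a hXh2b
    hXf2a hXf2b
  have hX : ∀ i k, X i k = Function.extend Fin.val (X i) 0 k := fun i k =>
    (Fin.val_injective.extend_apply (X i) 0 k).symm
  have hmid : ∀ w i k r, B w (B (X i k) (sl2SumBasis e h f r)) = 0 := fun w i k r => by
    rw [hX]
    exact hx.mul_x_mul_eq_zero w i k r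
  refine leibniz_of_span_eq_top
    (v := Sum.elim (sl2SumBasis e h f) fun p : Fin 2 × Fin (m + 1) => X p.1 p.2) hspan ?_
  rintro (p | ⟨i, k⟩) (q | ⟨j, l⟩) (r | ⟨j', l'⟩) <;> simp only [Sum.elim_inl, Sum.elim_inr]
  case inl.inl.inl => exact sl2SumBasis_leibniz B e h f hsl hcross p q r
  case inr.inl.inl =>
    rw [hX i k]
    exact hx.leibniz hsl hcross i k q r
  all_goals simp [hann, hmid]

/-- The multiplication table of Theorem 4.2 defines a genuine (right) Leibniz algebra:
on a `(2m+8)`-dimensional complex space with basis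
`{e₁,h₁,f₁,e₂,h₂,f₂, x_0^1,…,x_m^1, x_0^2,…,x_m^2}` the given table satisfies the
Leibniz identity `[x,[y,z]] = [[x,y],z] - [[x,z],y]`. -/
theorem table_of_thm42_is_Leibniz
    (m : ℕ) (V : Type*) [AddCommGroup V] [Module ℂ V]
    (B : V →ₗ[ℂ] V →ₗ[ℂ] V)
    (e h f : Fin 2 → V) (X : Fin 2 → Fin (m + 1) → V)
    -- the listed vectors form a basis of `V`
    (hindep : LinearIndependent ℂ
      (Sum.elim (fun p : Fin 2 × Fin 3 => ![e p.1, h p.1, f p.1] p.2)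
        (fun p : Fin 2 × Fin (m + 1) => X p.1 p.2)))
    (hspan : Submodule.span ℂ
      (Set.range (Sum.elim (fun p : Fin 2 × Fin 3 => ![e p.1, h p.1, f p.1] p.2)
        (fun p : Fin 2 × Fin (m + 1) => X p.1 p.2))) = ⊤)
    -- two commuting copies of sl₂
    (hsl : ∀ i, B (e i) (h i) = (2 : ℂ) • e i ∧ B (h i) (e i) = -((2 : ℂ) • e i) ∧
      B (h i) (f i) = (2 : ℂ) • f i ∧ B (f i) (h i) = -((2 : ℂ) • f i) ∧
      B (e i) (f i) = h i ∧ B (f i) (e i) = -(h i) ∧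
      B (e i) (e i) = 0 ∧ B (f i) (f i) = 0 ∧ B (h i) (h i) = 0)
    (hcross : ∀ i j, i ≠ j →
      ∀ u ∈ ({e i, f i, h i} : Set V), ∀ v ∈ ({e j, f j, h j} : Set V), B u v = 0)
    -- the action of the first copy of sl₂ on the modules
    (hXh1 : ∀ i k, B (X i k) (h 0) = ((m : ℂ) - 2 * ((k : Fin (m+1)) : ℕ)) • X i k)
    (hXf1 : ∀ (i) (k : Fin m), B (X i k.castSucc) (f 0) = X i k.succ)
    (hXf1last : ∀ i, B (X i (Fin.last m)) (f 0) = 0)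
    (hXe10 : ∀ i, B (X i 0) (e 0) = 0)
    (hXe1 : ∀ (i) (k : Fin m), B (X i k.succ) (e 0) =
      (-(((k : ℕ) : ℂ) + 1) * ((m : ℂ) - (k : ℕ))) • X i k.castSucc)
    -- the action of the second copy of sl₂
    (hXe2a : ∀ k, B (X 0 k) (e 1) = X 1 k)
    (hXe2b : ∀ k, B (X 1 k) (e 1) = 0)
    (hXh2a : ∀ k, B (X 0 k) (h 1) = -(X 0 k))
    (hXh2b : ∀ k, B (X 1 k) (h 1) = X 1 k)
    (hXf2a : ∀ k, B (X 0 k) (f 1) = 0)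
    (hXf2b : ∀ k, B (X 1 k) (f 1) = -(X 0 k))
    -- all remaining products are zero
    (hleft : ∀ u ∈ ({e 0, f 0, h 0, e 1, f 1, h 1} : Set V), ∀ i k, B u (X i k) = 0)
    (hXX : ∀ i k j l, B (X i k) (X j l) = 0) :
    ∀ x y z : V, B x (B y z) = B (B x y) z - B (B x z) y :=
  table_of_thm42_is_Leibniz_general m V B e h f X hspan hsl hcross hXh1 hXf1 hXf1last hXe10 hXe1
    hXe2a hXe2b hXh2a hXh2b hXf2a hXf2b hleft hXX
end

section
/- Let L be a right Leibniz algebra over a field of characteristic zero with ideal of squares I of dimension 1, and suppose the associated Lie algebra G = L/I is semisimple (more generally, [G,G]=G). Then [I, L] = 0, and consequently L ≅ G ⊕ I as a direct sum of a Lie algebra and a 1-dimensional abelian ideal with all products with I zero. -/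
/-- Let `L` be a right Leibniz algebra over a field of characteristic zero whose ideal
of squares `I` is 1-dimensional, and suppose the associated Lie algebra `G = L/I` is
perfect (`[G,G] = G`, e.g. semisimple): every element of `L` is, modulo `I`, a linear
combination of brackets.  Then all products with `I` vanish, so `L ≅ G ⊕ I`. -/
theorem one_dim_I_central
    (F L : Type*) [Field F] [CharZero F] [AddCommGroup L] [Module F L]
    [FiniteDimensional F L]
    (B : L →ₗ[F] L →ₗ[F] L)
    (leib : ∀ x y z : L, B x (B y z) = B (B x y) z - B (B x z) y)
    (I : Submodule F L)
    (hI : I = Submodule.span F {a : L | ∃ x : L, a = B x x})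
    (hdim : Module.finrank F I = 1)
    (hperfect : ∀ x : L, x ∈ Submodule.span F {z : L | ∃ a b : L, z = B a b} ⊔ I) :
    ∀ a ∈ I, ∀ y : L, B a y = 0 ∧ B y a = 0 := by
  -- right multiplication by a square is zero
  have sq_right : ∀ x z : L, B z (B x x) = 0 := by
    intro x z
    have h := leib z x x
    simpa using h
  -- right multiplication by any element of I is zero
  have right_zero : ∀ b ∈ I, ∀ z : L, B z b = 0 := by
    intro b hb z
    rw [hI] at hb
    have hle : Submodule.span F {a : L | ∃ x, a = B x x} ≤ LinearMap.ker (B z) := by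
      rw [Submodule.span_le]
      rintro _ ⟨x, rfl⟩
      simp [LinearMap.mem_ker, sq_right]
    exact LinearMap.mem_ker.1 (hle hb)
  have sq_mem : ∀ x : L, B x x ∈ I := by
    intro x; rw [hI]; exact Submodule.subset_span ⟨x, rfl⟩
  -- polarization
  have polar : ∀ u v : L, B u v + B v u ∈ I := by
    intro u v
    have key : B u v + B v u = B (u + v) (u + v) - B u u - B v v := by
      simp only [map_add, LinearMap.add_apply]; abel
    rw [key]
    exact I.sub_mem (I.sub_mem (sq_mem _) (sq_mem u)) (sq_mem v)
  -- I is a left ideal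
  have ideal : ∀ b ∈ I, ∀ z : L, B b z ∈ I := by
    intro b hb z
    rw [hI] at hb
    have hle : Submodule.span F {a : L | ∃ x, a = B x x} ≤
        Submodule.comap (B.flip z) I := by
      rw [Submodule.span_le]
      rintro _ ⟨x, rfl⟩
      refine Submodule.mem_comap.2 ?_
      rw [LinearMap.flip_apply]
      have h2 : B (B x x) z = B x (B x z) + B (B x z) x := by
        rw [leib x x z]; abel
      rw [h2]
      exact polar x (B x z)
    simpa using hle hb
  -- pick a generator of I
  obtain ⟨v, hv0, hv⟩ := finrank_eq_one_iff'.1 hdim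
  set a₀ : L := (v : L) with ha₀
  have ha₀I : a₀ ∈ I := v.2
  have getc : ∀ u : L, ∃ c : F, B a₀ u = c • a₀ := by
    intro u
    obtain ⟨c, hc⟩ := hv ⟨B a₀ u, ideal a₀ ha₀I u⟩
    exact ⟨c, by simpa using congrArg Subtype.val hc.symm⟩
  -- B a₀ z = 0 for all z
  have ha0zero : ∀ z : L, B a₀ z = 0 := by
    have hker : Submodule.span F {z : L | ∃ a b : L, z = B a b} ⊔ I ≤
        LinearMap.ker (B a₀) := by
      apply sup_le
      · rw [Submodule.span_le]
        rintro _ ⟨u, w, rfl⟩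
        obtain ⟨c1, hc1⟩ := getc u
        obtain ⟨c2, hc2⟩ := getc w
        simp only [Set.mem_setOf_eq, SetLike.mem_coe, LinearMap.mem_ker]
        rw [leib a₀ u w, hc1, hc2, map_smul, LinearMap.smul_apply, map_smul,
          LinearMap.smul_apply, hc1, hc2, smul_smul, smul_smul, mul_comm]
        exact sub_self _
      · intro b hb
        exact LinearMap.mem_ker.2 (right_zero b hb a₀)
    intro z
    exact LinearMap.mem_ker.1 (hker (hperfect z))
  intro a ha y
  refine ⟨?_, right_zero a ha y⟩
  obtain ⟨c, hc⟩ := hv ⟨a, ha⟩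
  have hac : a = c • a₀ := by simpa using congrArg Subtype.val hc.symm
  rw [hac, map_smul, LinearMap.smul_apply, ha0zero, smul_zero]
end

section
/- Let L be a right Leibniz algebra over ℂ whose ideal of squares I is 2-dimensional with basis {x,y}, let G = L/I have a basis {e_1,…,e_m} with the property that each basis element e_i equals a bracket [e_p,e_q] of two basis elements, and write [x,e_i] = α_i x + β_i y, [y,e_i] = γ_i x + δ_i y. Then δ_i = −α_i for all i; i.e. each right multiplication operator on I is a traceless 2×2 matrix. -/
/-- Let `L` be a right Leibniz algebra over `ℂ` whose ideal of squares `I` is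
2-dimensional with basis `{x, y}`, and let `e₁, …, e_m` be elements whose images span
`L/I` and such that each `e i` is a bracket `[e p, e q]` of two of them.  Writing
`[x, e i] = αᵢ x + βᵢ y` and `[y, e i] = γᵢ x + δᵢ y`, we have `δᵢ = -αᵢ` for all `i`:
each right multiplication operator on `I` is traceless. -/
theorem right_mult_on_two_dim_I_traceless
    (L : Type*) [AddCommGroup L] [Module ℂ L]
    (B : L →ₗ[ℂ] L →ₗ[ℂ] L)
    (leib : ∀ x y z : L, B x (B y z) = B (B x y) z - B (B x z) y)
    (I : Submodule ℂ L)
    (hI : I = Submodule.span ℂ {a : L | ∃ u : L, a = B u u})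
    (x y : L) (hx : x ∈ I) (hy : y ∈ I)
    (hbasis : I = Submodule.span ℂ ({x, y} : Set L))
    (hindep : LinearIndependent ℂ ![x, y])
    (m : ℕ) (e : Fin m → L)
    (hbracket : ∀ i : Fin m, ∃ p q : Fin m, e i = B (e p) (e q))
    (α β γ δ : Fin m → ℂ)
    (hxe : ∀ i, B x (e i) = α i • x + β i • y)
    (hye : ∀ i, B y (e i) = γ i • x + δ i • y) :
    ∀ i, δ i = -α i := by
  have pair := LinearIndependent.pair_iff.mp hindep
  intro i
  obtain ⟨p, q, h⟩ := hbracket i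
  -- expand B x (e i)
  have h1 : B x (e i) = B (B x (e p)) (e q) - B (B x (e q)) (e p) := by
    rw [h, leib]
  have h2 : B y (e i) = B (B y (e p)) (e q) - B (B y (e q)) (e p) := by
    rw [h, leib]
  rw [hxe i, hxe p, hxe q] at h1
  rw [hye i, hye p, hye q] at h2
  simp only [map_add, map_smul, LinearMap.add_apply, LinearMap.smul_apply,
    hxe, hye] at h1 h2
  have hx1 : (α i - (α p * α q + β p * γ q - (α q * α p + β q * γ p))) • x
      + (β i - (α p * β q + β p * δ q - (α q * β p + β q * δ p))) • y = 0 := by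
    linear_combination (norm := module) h1
  have hy1 : (γ i - (γ p * α q + δ p * γ q - (γ q * α p + δ q * γ p))) • x
      + (δ i - (γ p * β q + δ p * δ q - (γ q * β p + δ q * δ p))) • y = 0 := by
    linear_combination (norm := module) h2
  have e1 := (pair _ _ hx1).1
  have e2 := (pair _ _ hy1).2
  linear_combination e2 + e1
end
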